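/- Let n ≥ 4. The alternating word w = LRLR… of length n − 1 in the Farey binary tree has value 𝔉_{n−1}/𝔉_n, and the reduced degree sequence of the Haros graph G_{𝔉_{n−1}/𝔉_n} contains exactly 𝔉_{n−2} entries equal to 2, exactly 𝔉_{n−3} entries equal to 3, no entry equal to 4, exactly 𝔉_{n+1−k} entries equal to k for each 5 ≤ k ≤ n + 1, and exactly one entry equal to n + 2 (the boundary degree). -/

import Mathlib

/-! Along the zigzag path the final pair of every prefix consists of the values of the two
previous prefixes, so values and unreduced degree sequences both follow a Fibonacci recursion:
for `m ≥ 2`, `D(fib (m+2) / fib (m+3))` is the `⊕` of `D(fib m / fib (m+1))` and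
`D(fib (m+1) / fib (m+2))`, in an order that alternates with the parity of `m`. Each of these
sequences is an inner block framed by the end entries `⌈m/2⌉ + 1` and `⌊m/2⌋ + 1`, so `⊕` glues
the two inner blocks around one new entry, the sum `m + 3` of the two adjacent end entries.
The number of inner entries equal to `k` therefore satisfies
`c (m+2) = c m + c (m+1) + [k = m + 3]`, which yields the Fibonacci counts, and the boundary
degree is the sum of the two end entries, `n + 2`.
-/

/-- Symbols for paths in the Farey binary tree. -/
inductive LR
  | L
  | R
deriving DecidableEq

/-- One step in the Farey binary tree: update the current pair of fractions
(represented as pairs (numerator, denominator) of naturals). -/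
def fareyStep : ((ℕ × ℕ) × (ℕ × ℕ)) → LR → ((ℕ × ℕ) × (ℕ × ℕ))
  | ((a, b), (c, d)), LR.L => ((a, b), (a + c, b + d))
  | ((a, b), (c, d)), LR.R => ((a + c, b + d), (c, d))

/-- The final pair of fractions of a word: after reading the first symbol `L`
the current pair is (0/1, 1/1); the remaining symbols update it. -/
def finalPair (w : List LR) : (ℕ × ℕ) × (ℕ × ℕ) :=
  w.tail.foldl fareyStep ((0, 1), (1, 1))

/-- The value ⟨w⟩ of a word: the mediant of its final pair, as (numerator, denominator). -/
def value (w : List LR) : ℕ × ℕ :=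
  ((finalPair w).1.1 + (finalPair w).2.1, (finalPair w).1.2 + (finalPair w).2.2)

/-- A word over {L,R} is a Farey word when its first symbol is `L`. -/
def IsFareyWord (w : List LR) : Prop := w.head? = some LR.L

/-- Concatenation of degree sequences:
[a₁,…,a_s] ⊕ [b₁,…,b_t] = [a₁+1, a₂, …, a_{s−1}, a_s+b₁, b₂, …, b_{t−1}, b_t+1]. -/
def oplus (A B : List ℕ) : List ℕ :=
  (A.dropLast.modifyHead (· + 1)) ++ [A.getLastD 0 + B.headD 0] ++ B.tail.dropLast
    ++ [B.getLastD 0 + 1]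

/-- Update of the pair (D(left ancestor), D(right ancestor)) of unreduced degree
sequences along one symbol. -/
def degStep : (List ℕ × List ℕ) → LR → (List ℕ × List ℕ)
  | (A, B), LR.L => (A, oplus A B)
  | (A, B), LR.R => (oplus A B, B)

/-- The pair (D(a/b), D(c/d)) of unreduced degree sequences of the final pair of a word;
0/1 and 1/1 are both assigned the list [1,1]. -/
def degPair (w : List LR) : List ℕ × List ℕ :=
  w.tail.foldl degStep ([1, 1], [1, 1])

/-- The unreduced degree sequence D(⟨w⟩) = D(a/b) ⊕ D(c/d) of the value of a word. -/
def Dseq (w : List LR) : List ℕ :=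
  oplus (degPair w).1 (degPair w).2

/-- Reduction: [k₁,…,k_{q+1}] becomes [k₂,…,k_q, k₁+k_{q+1}]; the last entry is the
boundary degree and the remaining ones are the inner degrees. -/
def reduce (D : List ℕ) : List ℕ :=
  D.tail.dropLast ++ [D.headD 0 + D.getLastD 0]

/-- The reduced degree sequence of the Haros graph G_{⟨w⟩}. -/
def degSeq (w : List LR) : List ℕ := reduce (Dseq w)

/-- Degree-distribution entropy S of the Haros graph G_{⟨w⟩}:
S = −Σ_k P(k)·ln P(k), summed over the degree values occurring in the reduced
degree sequence, where P(k) = m(k)/q. -/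
noncomputable def Sent (w : List LR) : ℝ :=
  -∑ k ∈ (degSeq w).toFinset,
    (((degSeq w).count k : ℝ) / ((value w).2 : ℝ)) *
      Real.log (((degSeq w).count k : ℝ) / ((value w).2 : ℝ))

/-- Reduced entropy H of the Haros graph G_{⟨w⟩} (with the convention 0·ln 0 = 0,
automatic since Real.log 0 = 0). -/
noncomputable def Hent (w : List LR) : ℝ :=
  let x : ℝ := ((value w).1 : ℝ) / ((value w).2 : ℝ)
  if x ≤ 1 / 2 then
    Sent w + 2 * x * Real.log x + (1 - 2 * x) * Real.log (1 - 2 * x)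
  else
    Sent w + 2 * (1 - x) * Real.log (1 - x) + (2 * x - 1) * Real.log (2 * x - 1)

/-- The alternating word LRLR… of length m. -/
def zigzag (m : ℕ) : List LR :=
  (List.range m).map (fun i => if i % 2 = 0 then LR.L else LR.R)

open Nat (fib)

theorem oplus_cons_concat (x x' y y' : ℕ) (A B : List ℕ) :
    oplus (x :: A ++ [x']) (y :: B ++ [y']) = (x + 1) :: A ++ (x' + y) :: B ++ [y' + 1] := by
  rw [oplus, List.dropLast_concat, List.getLastD_concat, List.getLastD_concat]
  simp

theorem reduce_cons_concat (x y : ℕ) (A : List ℕ) : reduce (x :: A ++ [y]) = A ++ [x + y] := by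
  simp only [reduce, List.getLastD_concat]
  simp

theorem zigzag_succ (m : ℕ) :
    zigzag (m + 1) = zigzag m ++ [if m % 2 = 0 then LR.L else LR.R] := by
  simp [zigzag, List.range_succ]

theorem zigzag_succ_ne_nil (m : ℕ) : zigzag (m + 1) ≠ [] := by
  simp [zigzag]

theorem finalPair_concat {w : List LR} (hw : w ≠ []) (s : LR) :
    finalPair (w ++ [s]) = fareyStep (finalPair w) s := by
  rw [finalPair, finalPair, List.tail_append_of_ne_nil hw, List.foldl_concat]

theorem degPair_concat {w : List LR} (hw : w ≠ []) (s : LR) :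
    degPair (w ++ [s]) = degStep (degPair w) s := by
  rw [degPair, degPair, List.tail_append_of_ne_nil hw, List.foldl_concat]

theorem finalPair_zigzag_succ (m : ℕ) : finalPair (zigzag (m + 1)) =
    if m % 2 = 0 then ((fib m, fib (m + 1)), (fib (m + 1), fib (m + 2)))
    else ((fib (m + 1), fib (m + 2)), (fib m, fib (m + 1))) := by
  induction m with
  | zero => rfl
  | succ m ih =>
    rw [zigzag_succ, finalPair_concat (zigzag_succ_ne_nil m), ih]
    rcases Nat.mod_two_eq_zero_or_one m with h | h <;>
      simp [h, Nat.succ_mod_two_eq_zero_iff, fareyStep, Nat.fib_add_two]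
    omega

theorem value_zigzag_succ (m : ℕ) : value (zigzag (m + 1)) = (fib (m + 2), fib (m + 3)) := by
  rw [value, finalPair_zigzag_succ]
  split <;> simp only [Nat.fib_add_two, add_comm, add_left_comm]

def fibInnerDeg : ℕ → List ℕ
  | 0 | 1 => []
  | 2 => [2]
  | 3 => [2, 3]
  | m + 4 =>
    if m % 2 = 0 then fibInnerDeg (m + 2) ++ (m + 5) :: fibInnerDeg (m + 3)
    else fibInnerDeg (m + 3) ++ (m + 5) :: fibInnerDeg (m + 2)

-- For `m ≠ 1`, `fibDeg m` is the unreduced degree sequence `D(fib m / fib (m + 1))`;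
-- the exception is `D(1/1) = [1, 1]`.
def fibDeg (m : ℕ) : List ℕ := ((m + 1) / 2 + 1) :: fibInnerDeg m ++ [m / 2 + 1]

def fibDegPair (m : ℕ) : List ℕ × List ℕ :=
  if m % 2 = 0 then (fibDeg m, fibDeg (m + 1)) else (fibDeg (m + 1), fibDeg m)

theorem fibInnerDeg_add_two {m : ℕ} (hm : 2 ≤ m) : fibInnerDeg (m + 2) =
    if m % 2 = 0 then fibInnerDeg m ++ (m + 3) :: fibInnerDeg (m + 1)
    else fibInnerDeg (m + 1) ++ (m + 3) :: fibInnerDeg m := by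
  obtain ⟨k, rfl⟩ := Nat.exists_eq_add_of_le' hm
  simp [fibInnerDeg]

theorem oplus_fibDegPair {m : ℕ} (hm : 2 ≤ m) :
    oplus (fibDegPair m).1 (fibDegPair m).2 = fibDeg (m + 2) := by
  rcases Nat.mod_two_eq_zero_or_one m with h | h <;>
  · simp only [fibDegPair, fibDeg, fibInnerDeg_add_two hm, h, one_ne_zero, ↓reduceIte]
    rw [oplus_cons_concat]
    simp only [List.cons_append, List.append_assoc, List.cons.injEq, List.append_cancel_left_eq,
      and_true]
    omega

theorem degPair_zigzag_succ {m : ℕ} (hm : 2 ≤ m) : degPair (zigzag (m + 1)) = fibDegPair m := by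
  induction m, hm using Nat.le_induction with
  | base => decide
  | succ m hm ih =>
    have key := oplus_fibDegPair hm
    rw [zigzag_succ, degPair_concat (zigzag_succ_ne_nil m), ih]
    rcases Nat.mod_two_eq_zero_or_one m with h | h <;>
      simp_all [fibDegPair, degStep, Nat.succ_mod_two_eq_zero_iff]

theorem degSeq_zigzag_succ {m : ℕ} (hm : 2 ≤ m) :
    degSeq (zigzag (m + 1)) = fibInnerDeg (m + 2) ++ [m + 4] := by
  rw [degSeq, Dseq, degPair_zigzag_succ hm, oplus_fibDegPair hm, fibDeg, reduce_cons_concat]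
  congr 2
  omega

theorem fibInnerDeg_perm {m : ℕ} (hm : 2 ≤ m) :
    (fibInnerDeg (m + 2)).Perm (fibInnerDeg m ++ (m + 3) :: fibInnerDeg (m + 1)) := by
  rw [fibInnerDeg_add_two hm]
  split
  · rfl
  · exact List.perm_middle.trans ((List.perm_append_comm.cons _).trans List.perm_middle.symm)

theorem count_fibInnerDeg_add_two {m : ℕ} (hm : 2 ≤ m) (k : ℕ) :
    (fibInnerDeg (m + 2)).count k =
      (fibInnerDeg m).count k + (fibInnerDeg (m + 1)).count k + if m + 3 = k then 1 else 0 := by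
  simp [(fibInnerDeg_perm hm).count_eq, List.count_cons, add_assoc]

theorem count_two_fibInnerDeg (m : ℕ) : (fibInnerDeg (m + 2)).count 2 = fib (m + 1) := by
  induction m using Nat.twoStepInduction with
  | zero => rfl
  | one => rfl
  | more m ih₀ ih₁ =>
    have hfib := Nat.fib_add_two (n := m + 1)
    rw [count_fibInnerDeg_add_two (by omega), if_neg (by omega)]
    simp only [Nat.add_assoc, Nat.reduceAdd] at *
    omega

theorem count_three_fibInnerDeg (m : ℕ) : (fibInnerDeg (m + 2)).count 3 = fib m := by
  induction m using Nat.twoStepInduction with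
  | zero => rfl
  | one => rfl
  | more m ih₀ ih₁ =>
    have hfib := Nat.fib_add_two (n := m)
    rw [count_fibInnerDeg_add_two (by omega), if_neg (by omega)]
    simp only [Nat.add_assoc, Nat.reduceAdd] at *
    omega

theorem count_four_fibInnerDeg (m : ℕ) : (fibInnerDeg (m + 2)).count 4 = 0 := by
  induction m using Nat.twoStepInduction with
  | zero => rfl
  | one => rfl
  | more m ih₀ ih₁ =>
    rw [count_fibInnerDeg_add_two (by omega), if_neg (by omega)]
    simp only [Nat.add_assoc, Nat.reduceAdd] at *
    omega

theorem fib_add_two_sub (n k : ℕ) :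
    fib (n + 2 - k) = fib (n - k) + fib (n + 1 - k) + if n + 1 = k then 1 else 0 := by
  rcases lt_trichotomy k (n + 1) with h | rfl | h
  · rw [if_neg h.ne', show n + 2 - k = n - k + 2 by omega, Nat.fib_add_two,
      show n - k + 1 = n + 1 - k by omega, add_zero]
  · simp
  · simp (disch := omega) only [Nat.sub_eq_zero_of_le, if_neg h.ne, Nat.fib_zero]

theorem count_fibInnerDeg_of_five_le {k : ℕ} (hk : 5 ≤ k) (m : ℕ) :
    (fibInnerDeg (m + 2)).count k = fib (m + 4 - k) := by
  induction m using Nat.twoStepInduction with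
  | zero | one =>
    simp (disch := omega) only [Nat.sub_eq_zero_of_le, Nat.fib_zero, List.count_eq_zero]
    simp [fibInnerDeg]
    omega
  | more m ih₀ ih₁ =>
    have hfib := fib_add_two_sub (m + 4) k
    rw [count_fibInnerDeg_add_two (by omega)]
    simp only [Nat.add_assoc, Nat.reduceAdd] at *
    omega

/-- for n ≥ 4 the alternating word LRLR… of length n − 1 has value
𝔉_{n−1}/𝔉_n (with 𝔉₀ = 𝔉₁ = 1, so 𝔉_m = Nat.fib (m+1)), and the reduced degree
sequence of G_{𝔉_{n−1}/𝔉_n} has exactly 𝔉_{n−2} entries equal to 2, 𝔉_{n−3} entries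
equal to 3, no entry 4, exactly 𝔉_{n+1−k} entries equal to k for 5 ≤ k ≤ n+1, and
exactly one entry n + 2 (the boundary degree). -/
theorem statement17 (n : ℕ) (hn : 4 ≤ n) :
    value (zigzag (n - 1)) = (Nat.fib n, Nat.fib (n + 1)) ∧
    (degSeq (zigzag (n - 1))).count 2 = Nat.fib (n - 1) ∧
    (degSeq (zigzag (n - 1))).count 3 = Nat.fib (n - 2) ∧
    (degSeq (zigzag (n - 1))).count 4 = 0 ∧
    (∀ k, 5 ≤ k → k ≤ n + 1 → (degSeq (zigzag (n - 1))).count k = Nat.fib (n + 2 - k)) ∧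
    (degSeq (zigzag (n - 1))).count (n + 2) = 1 := by
  obtain ⟨m, rfl⟩ : ∃ m, n = m + 2 := ⟨n - 2, by omega⟩
  have hseq : degSeq (zigzag (m + 1)) = fibInnerDeg (m + 2) ++ [m + 4] :=
    degSeq_zigzag_succ (by omega)
  simp only [hseq, List.count_append, List.count_singleton, beq_iff_eq, Nat.reduceSubDiff,
    Nat.add_assoc, Nat.reduceAdd]
  refine ⟨value_zigzag_succ m, ?_, ?_, ?_, fun k hk₁ hk₂ => ?_, ?_⟩
  · rw [count_two_fibInnerDeg, if_neg (by omega), add_zero]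
  · rw [count_three_fibInnerDeg, if_neg (by omega), add_zero]
  · rw [count_four_fibInnerDeg, if_neg (by omega)]
  · rw [count_fibInnerDeg_of_five_le hk₁, if_neg (by omega), add_zero]
  · rw [count_fibInnerDeg_of_five_le (by omega), Nat.sub_self, Nat.fib_zero, if_pos trivial]
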